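/- arXiv:0909.2817 — 3 statements merged into one kernel-verified Lean document; each statement's English description precedes it below -/
import Mathlib

section
/- The set {(x, y) : 0 ≤ x, y, x + y = min(l₁,l₂) − 1} is a strongly cancellative set of size min(l₁, l₂) in the lattice D_{l₁,l₂}, and moreover any two distinct elements of this set are incomparable. -/
/-!
In a product of two chains the antidiagonal is an antichain whose elements have pairwise distinct
first and pairwise distinct second coordinates. If `a ⊓ b = a ⊓ c` with `b ≠ c`, the two minima in
each coordinate can only agree because both equal the coordinate of `a`, so `a ≤ b` and `a ≤ c`;
in an antichain this forces `a = b = c`. Joins are dual.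
-/

open Finset

/-- `C` is a strongly cancellative set in the lattice `α`. -/
def IsStronglyCancellative {α : Type*} [Lattice α] (C : Finset α) : Prop :=
  ∀ a1 ∈ C, ∀ a2 ∈ C, ∀ a3 ∈ C, a1 ≠ a2 → a1 ≠ a3 → a2 ≠ a3 →
    a1 ⊓ a2 ≠ a1 ⊓ a3 ∧ a1 ⊔ a2 ≠ a1 ⊔ a3

section LinearOrder

variable {α : Type*} [LinearOrder α]

lemma le_of_min_eq_min_of_ne {a b c : α} (h : min a b = min a c) (hbc : b ≠ c) : a ≤ b := by
  by_contra! hba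
  rw [min_eq_right hba.le] at h
  rcases min_choice a c with hc | hc <;> rw [hc] at h
  · exact hba.ne h
  · exact hbc h

lemma le_of_max_eq_max_of_ne {a b c : α} (h : max a b = max a c) (hbc : b ≠ c) : b ≤ a :=
  le_of_min_eq_min_of_ne (α := αᵒᵈ) h hbc

end LinearOrder

namespace IsAntichain

variable {α β : Type*} [LinearOrder α] [LinearOrder β] {s : Set (α × β)}

lemma fst_injOn (hs : IsAntichain (· ≤ ·) s) : Set.InjOn Prod.fst s := by
  intro b hb c hc h
  rcases le_total b.2 c.2 with h2 | h2
  · exact hs.eq hb hc ⟨h.le, h2⟩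
  · exact hs.eq' hb hc ⟨h.ge, h2⟩

lemma snd_injOn (hs : IsAntichain (· ≤ ·) s) : Set.InjOn Prod.snd s := by
  intro b hb c hc h
  rcases le_total b.1 c.1 with h1 | h1
  · exact hs.eq hb hc ⟨h1, h.le⟩
  · exact hs.eq' hb hc ⟨h1, h.ge⟩

lemma inf_left_injOn (hs : IsAntichain (· ≤ ·) s) {a : α × β} (ha : a ∈ s) :
    Set.InjOn (a ⊓ ·) s := by
  intro b hb c hc h
  by_contra hbc
  have hne₁ : b.1 ≠ c.1 := fun e => hbc (hs.fst_injOn hb hc e)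
  have hne₂ : b.2 ≠ c.2 := fun e => hbc (hs.snd_injOn hb hc e)
  have hab : a ≤ b := ⟨le_of_min_eq_min_of_ne (congrArg Prod.fst h) hne₁,
    le_of_min_eq_min_of_ne (congrArg Prod.snd h) hne₂⟩
  have hac : a ≤ c := ⟨le_of_min_eq_min_of_ne (congrArg Prod.fst h.symm) hne₁.symm,
    le_of_min_eq_min_of_ne (congrArg Prod.snd h.symm) hne₂.symm⟩
  exact hbc ((hs.eq ha hb hab).symm.trans (hs.eq ha hc hac))

lemma sup_left_injOn (hs : IsAntichain (· ≤ ·) s) {a : α × β} (ha : a ∈ s) :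
    Set.InjOn (a ⊔ ·) s := by
  intro b hb c hc h
  by_contra hbc
  have hne₁ : b.1 ≠ c.1 := fun e => hbc (hs.fst_injOn hb hc e)
  have hne₂ : b.2 ≠ c.2 := fun e => hbc (hs.snd_injOn hb hc e)
  have hba : b ≤ a := ⟨le_of_max_eq_max_of_ne (congrArg Prod.fst h) hne₁,
    le_of_max_eq_max_of_ne (congrArg Prod.snd h) hne₂⟩
  have hca : c ≤ a := ⟨le_of_max_eq_max_of_ne (congrArg Prod.fst h.symm) hne₁.symm,
    le_of_max_eq_max_of_ne (congrArg Prod.snd h.symm) hne₂.symm⟩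
  exact hbc ((hs.eq' ha hb hba).symm.trans (hs.eq' ha hc hca))

lemma isStronglyCancellative {C : Finset (α × β)} (hC : IsAntichain (· ≤ ·) (C : Set (α × β))) :
    IsStronglyCancellative C :=
  fun _ ha _ hb _ hc _ _ hbc =>
    ⟨fun h => hbc (hC.inf_left_injOn ha hb hc h), fun h => hbc (hC.sup_left_injOn ha hb hc h)⟩

end IsAntichain

section Antidiagonal

variable {l₁ l₂ : ℕ}

lemma isAntichain_filter_fin_add_eq (n : ℕ) :
    IsAntichain (· ≤ ·)
      (((univ.filter fun p => (p.1 : ℕ) + p.2 = n) : Finset (Fin l₁ × Fin l₂)) :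
        Set (Fin l₁ × Fin l₂)) := by
  intro p hp q hq hpq hle
  simp only [coe_filter, mem_univ, true_and, Set.mem_ofPred_eq] at hp hq
  have h₁ : (p.1 : ℕ) ≤ q.1 := hle.1
  have h₂ : (p.2 : ℕ) ≤ q.2 := hle.2
  exact hpq (Prod.ext (Fin.ext (by omega)) (Fin.ext (by omega)))

lemma card_filter_fin_add_eq_min_sub_one :
    #(univ.filter fun p : Fin l₁ × Fin l₂ => (p.1 : ℕ) + p.2 = min l₁ l₂ - 1) = min l₁ l₂ := by
  refine Eq.trans ?_ (card_range (min l₁ l₂))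
  refine card_bij (fun p _ => (p.1 : ℕ)) ?_ ?_ ?_
  · intro p hp
    simp only [mem_filter, mem_univ, true_and] at hp
    simp only [mem_range]
    omega
  · intro p hp q hq h
    simp only [mem_filter, mem_univ, true_and] at hp hq
    exact Prod.ext (Fin.ext h) (Fin.ext (by omega))
  · intro i hi
    simp only [mem_range] at hi
    refine ⟨(⟨i, by omega⟩, ⟨min l₁ l₂ - 1 - i, by omega⟩), ?_, rfl⟩
    simp only [mem_filter, mem_univ, true_and]
    omega

end Antidiagonal

theorem antidiagonal_strongly_cancellative_general {l₁ l₂ : ℕ} :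
    let C : Finset (Fin l₁ × Fin l₂) :=
      univ.filter (fun p => (p.1 : ℕ) + (p.2 : ℕ) = min l₁ l₂ - 1)
    IsStronglyCancellative C ∧ C.card = min l₁ l₂ ∧
      ∀ a ∈ C, ∀ b ∈ C, a ≠ b → ¬ a ≤ b := by
  intro C
  have hC : IsAntichain (· ≤ ·) (C : Set (Fin l₁ × Fin l₂)) := isAntichain_filter_fin_add_eq _
  exact ⟨hC.isStronglyCancellative, card_filter_fin_add_eq_min_sub_one,
    fun _ ha _ hb hab => hC ha hb hab⟩

theorem antidiagonal_strongly_cancellative {l₁ l₂ : ℕ} (hl₁ : 1 ≤ l₁) (hl₂ : 1 ≤ l₂) :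
    let C : Finset (Fin l₁ × Fin l₂) :=
      univ.filter (fun p => (p.1 : ℕ) + (p.2 : ℕ) = min l₁ l₂ - 1)
    IsStronglyCancellative C ∧ C.card = min l₁ l₂ ∧
      ∀ a ∈ C, ∀ b ∈ C, a ≠ b → ¬ a ≤ b :=
  antidiagonal_strongly_cancellative_general
end

section
/- Suppose C₁ is a strongly cancellative antichain in D_l^{k₁} (product of k₁ chains of length l−1). Then for any k with s = ⌊k/k₁⌋, the set of vectors v ∈ D_l^k whose j-th block of k₁ consecutive coordinates lies in C₁ for each 1 ≤ j ≤ s, and whose remaining k − s·k₁ coordinates are all 0, is a strongly cancellative set of size |C₁|^s in D_l^k. -/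
/-!
The set is the image of the `s`-fold power `C₁ ^ s` under the map that concatenates `s` blocks
and pads with zeros; this map is an injective lattice homomorphism, so it suffices that `C₁ ^ s`
is strongly cancellative in the product lattice. Given distinct `a₂, a₃`, pick a coordinate where
they differ: if `a₁` is distinct from both there, strong cancellativity of `C₁` applies, and if
`a₁` agrees with, say, `a₂` there, then `a₁ ⊓ a₂ = a₁ ⊓ a₃` would force `a₂ ≤ a₃` in that
coordinate, against the antichain property.
-/

open Finset

namespace IsStronglyCancellative

variable {α : Type*} [Lattice α] {C : Finset α}

theorem inf_ne_inf_of_isAntichain (hC : IsStronglyCancellative C)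
    (hA : IsAntichain (· ≤ ·) (C : Set α)) {a₁ a₂ a₃ : α} (h₁ : a₁ ∈ C) (h₂ : a₂ ∈ C)
    (h₃ : a₃ ∈ C) (h₂₃ : a₂ ≠ a₃) : a₁ ⊓ a₂ ≠ a₁ ⊓ a₃ := by
  intro h
  obtain rfl | h₁₂ := eq_or_ne a₁ a₂
  · exact hA h₂ h₃ h₂₃ (inf_eq_left.mp ((inf_idem _).symm.trans h).symm)
  obtain rfl | h₁₃ := eq_or_ne a₁ a₃
  · exact hA h₃ h₂ h₂₃.symm (inf_eq_left.mp (h.trans (inf_idem _)))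
  exact (hC a₁ h₁ a₂ h₂ a₃ h₃ h₁₂ h₁₃ h₂₃).1 h

theorem sup_ne_sup_of_isAntichain (hC : IsStronglyCancellative C)
    (hA : IsAntichain (· ≤ ·) (C : Set α)) {a₁ a₂ a₃ : α} (h₁ : a₁ ∈ C) (h₂ : a₂ ∈ C)
    (h₃ : a₃ ∈ C) (h₂₃ : a₂ ≠ a₃) : a₁ ⊔ a₂ ≠ a₁ ⊔ a₃ := by
  intro h
  obtain rfl | h₁₂ := eq_or_ne a₁ a₂
  · exact hA h₃ h₂ h₂₃.symm (sup_eq_left.mp ((sup_idem _).symm.trans h).symm)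
  obtain rfl | h₁₃ := eq_or_ne a₁ a₃
  · exact hA h₂ h₃ h₂₃ (sup_eq_left.mp (h.trans (sup_idem _)))
  exact (hC a₁ h₁ a₂ h₂ a₃ h₃ h₁₂ h₁₃ h₂₃).2 h

theorem piFinset {ι : Type*} [Fintype ι] [DecidableEq ι] (hC : IsStronglyCancellative C)
    (hA : IsAntichain (· ≤ ·) (C : Set α)) :
    IsStronglyCancellative (Fintype.piFinset fun _ : ι => C) := by
  intro a₁ h₁ a₂ h₂ a₃ h₃ _ _ h₂₃
  obtain ⟨i, hi⟩ := Function.ne_iff.mp h₂₃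
  simp only [Fintype.mem_piFinset] at h₁ h₂ h₃
  exact ⟨fun h => hC.inf_ne_inf_of_isAntichain hA (h₁ i) (h₂ i) (h₃ i) hi (congrFun h i),
    fun h => hC.sup_ne_sup_of_isAntichain hA (h₁ i) (h₂ i) (h₃ i) hi (congrFun h i)⟩

theorem image {β F : Type*} [Lattice β] [DecidableEq β] [FunLike F α β]
    [LatticeHomClass F α β] (hC : IsStronglyCancellative C) (f : F)
    (hf : Function.Injective f) : IsStronglyCancellative (C.image f) := by
  intro b₁ hb₁ b₂ hb₂ b₃ hb₃
  obtain ⟨a₁, h₁, rfl⟩ := mem_image.mp hb₁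
  obtain ⟨a₂, h₂, rfl⟩ := mem_image.mp hb₂
  obtain ⟨a₃, h₃, rfl⟩ := mem_image.mp hb₃
  simp only [← map_inf, ← map_sup, hf.ne_iff]
  exact hC a₁ h₁ a₂ h₂ a₃ h₃

end IsStronglyCancellative

section Blocks

variable {α : Type*} {s k₁ k : ℕ}

/-- `Fin.mkDivMod j i` is position `k₁ * j + i`. -/
def blocks (hsk : s * k₁ ≤ k) (v : Fin k → α) : Fin s → Fin k₁ → α :=
  fun j i => v ((Fin.mkDivMod j i).castLE hsk)

theorem exists_block_eq_iff (hsk : s * k₁ ≤ k) (v : Fin k → α)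
    (B : Finset (Fin k₁ → α)) (j : Fin s) :
    (∃ b ∈ B, ∀ i : Fin k₁, ∀ h : (j : ℕ) * k₁ + i < k, v ⟨j * k₁ + i, h⟩ = b i) ↔
      blocks hsk v j ∈ B := by
  have hlt (i : Fin k₁) : (j : ℕ) * k₁ + i < k := by
    simpa [Nat.mul_comm] using ((Fin.mkDivMod j i).castLE hsk).isLt
  have hblock (i : Fin k₁) : blocks hsk v j i = v ⟨j * k₁ + i, hlt i⟩ :=
    congrArg v (Fin.ext (by simp [Nat.mul_comm]))
  constructor
  · rintro ⟨b, hb, hvb⟩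
    rwa [show blocks hsk v j = b from funext fun i => (hblock i).trans (hvb i (hlt i))]
  · exact fun h => ⟨_, h, fun i _ => (hblock i).symm⟩

def blockEncode [Lattice α] (z : α) : LatticeHom (Fin s → Fin k₁ → α) (Fin k → α) where
  toFun b i :=
    if h : (i : ℕ) < s * k₁ then b (Fin.divNat ⟨i, h⟩) (Fin.modNat ⟨i, h⟩) else z
  map_sup' b c := by
    funext i
    by_cases h : (i : ℕ) < s * k₁ <;> simp [h]
  map_inf' b c := by
    funext i
    by_cases h : (i : ℕ) < s * k₁ <;> simp [h]

variable [Lattice α] (z : α)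

theorem blockEncode_castLE (hsk : s * k₁ ≤ k) (b : Fin s → Fin k₁ → α) (p : Fin (s * k₁)) :
    blockEncode (k := k) z b (p.castLE hsk) = b p.divNat p.modNat :=
  dif_pos p.isLt

theorem blockEncode_of_le (b : Fin s → Fin k₁ → α) {i : Fin k} (hi : s * k₁ ≤ i) :
    blockEncode z b i = z :=
  dif_neg hi.not_gt

theorem blocks_blockEncode (hsk : s * k₁ ≤ k) (b : Fin s → Fin k₁ → α) :
    blocks hsk (blockEncode z b) = b := by
  funext j i
  simp [blocks, blockEncode_castLE]

theorem blockEncode_blocks (hsk : s * k₁ ≤ k) {v : Fin k → α}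
    (hv : ∀ i : Fin k, s * k₁ ≤ i → v i = z) : blockEncode z (blocks hsk v) = v := by
  funext i
  by_cases h : (i : ℕ) < s * k₁
  · have hi : i = Fin.castLE hsk ⟨i, h⟩ := rfl
    rw [hi, blockEncode_castLE, blocks, Fin.divNat_mkDivMod_modNat]
  · rw [blockEncode_of_le z _ (not_lt.mp h), hv i (not_lt.mp h)]

theorem blockEncode_injective (hsk : s * k₁ ≤ k) :
    Function.Injective (blockEncode (s := s) (k₁ := k₁) (k := k) z) :=
  Function.LeftInverse.injective (blocks_blockEncode z hsk)

theorem mem_image_blockEncode_iff [DecidableEq α] (hsk : s * k₁ ≤ k)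
    {S : Finset (Fin s → Fin k₁ → α)} {v : Fin k → α} :
    v ∈ S.image (blockEncode z) ↔ blocks hsk v ∈ S ∧ ∀ i : Fin k, s * k₁ ≤ i → v i = z := by
  constructor
  · intro hv
    obtain ⟨b, hb, rfl⟩ := mem_image.mp hv
    exact ⟨(blocks_blockEncode z hsk b).symm ▸ hb, fun i hi => blockEncode_of_le z b hi⟩
  · rintro ⟨hS, hv⟩
    exact mem_image.mpr ⟨blocks hsk v, hS, blockEncode_blocks z hsk hv⟩

end Blocks

theorem blockwise_strongly_cancellative_general {l k₁ : ℕ} (hl : 0 < l)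
    (C₁ : Finset (Fin k₁ → Fin l)) (hC₁ : IsStronglyCancellative C₁)
    (hanti : ∀ a ∈ C₁, ∀ b ∈ C₁, a ≠ b → ¬ a ≤ b) (k : ℕ) :
    let s := k / k₁
    ∃ C : Finset (Fin k → Fin l),
      (∀ v : Fin k → Fin l, v ∈ C ↔
        ((∀ j : Fin s, ∃ b ∈ C₁, ∀ i : Fin k₁,
            ∀ h : (j : ℕ) * k₁ + (i : ℕ) < k, v ⟨(j : ℕ) * k₁ + (i : ℕ), h⟩ = b i) ∧
         (∀ i : Fin k, s * k₁ ≤ (i : ℕ) → v i = ⟨0, hl⟩))) ∧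
      IsStronglyCancellative C ∧ C.card = C₁.card ^ s := by
  intro s
  have hsk : s * k₁ ≤ k := Nat.div_mul_le_self k k₁
  have hinj := blockEncode_injective (s := s) (k₁ := k₁) (⟨0, hl⟩ : Fin l) hsk
  refine ⟨(Fintype.piFinset fun _ : Fin s => C₁).image (blockEncode ⟨0, hl⟩), fun v => ?_,
    (hC₁.piFinset hanti).image _ hinj, ?_⟩
  · simp only [mem_image_blockEncode_iff _ hsk, Fintype.mem_piFinset, exists_block_eq_iff hsk]
  · simp [card_image_of_injective _ hinj]

theorem blockwise_strongly_cancellative {l k₁ : ℕ} (hl : 0 < l) (hk₁ : 0 < k₁)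
    (C₁ : Finset (Fin k₁ → Fin l)) (hC₁ : IsStronglyCancellative C₁)
    (hanti : ∀ a ∈ C₁, ∀ b ∈ C₁, a ≠ b → ¬ a ≤ b) (k : ℕ) :
    let s := k / k₁
    ∃ C : Finset (Fin k → Fin l),
      (∀ v : Fin k → Fin l, v ∈ C ↔
        ((∀ j : Fin s, ∃ b ∈ C₁, ∀ i : Fin k₁,
            ∀ h : (j : ℕ) * k₁ + (i : ℕ) < k, v ⟨(j : ℕ) * k₁ + (i : ℕ), h⟩ = b i) ∧
         (∀ i : Fin k, s * k₁ ≤ (i : ℕ) → v i = ⟨0, hl⟩))) ∧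
      IsStronglyCancellative C ∧ C.card = C₁.card ^ s :=
  blockwise_strongly_cancellative_general hl C₁ hC₁ hanti k
end

section
/- For every l ≥ 1 and k ≥ 1, there exists a strongly cancellative set of size l^{⌊k/2⌋} in the lattice D_l^k = {0,…,l−1}^k. -/
theorem exists_strongly_cancellative_Dlk (l k : ℕ) (hl : 1 ≤ l) (hk : 1 ≤ k) :
    ∃ C : Finset (Fin k → Fin l), IsStronglyCancellative C ∧ C.card = l ^ (k / 2) := by
  set m := k / 2 with hm
  let f : (Fin m → Fin l) → (Fin k → Fin l) := fun x j =>
    if h : j.val / 2 < m then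
      if j.val % 2 = 0 then x ⟨j.val / 2, h⟩
      else ⟨l - 1 - (x ⟨j.val / 2, h⟩).val, by omega⟩
    else ⟨0, hl⟩
  have hlt0 : ∀ i : Fin m, 2 * i.val < k := fun i => by have := i.isLt; omega
  have hlt1 : ∀ i : Fin m, 2 * i.val + 1 < k := fun i => by have := i.isLt; omega
  have hf0 : ∀ x (i : Fin m), f x ⟨2 * i.val, hlt0 i⟩ = x i := by
    intro x i
    show (if h : (2 * i.val) / 2 < m then _ else _) = x i
    rw [dif_pos (show (2 * i.val) / 2 < m by have := i.isLt; omega),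
      if_pos (show (2 * i.val) % 2 = 0 by omega)]
    congr 1
    exact Fin.ext (show 2 * i.val / 2 = i.val by omega)
  have hf1 : ∀ x (i : Fin m),
      (f x ⟨2 * i.val + 1, hlt1 i⟩).val = l - 1 - (x i).val := by
    intro x i
    have hd : (2 * i.val + 1) / 2 < m := by have := i.isLt; omega
    have hidx : (⟨(2 * i.val + 1) / 2, hd⟩ : Fin m) = i :=
      Fin.ext (show (2 * i.val + 1) / 2 = i.val by omega)
    show (if h : (2 * i.val + 1) / 2 < m then _ else _ : Fin l).val = _
    rw [dif_pos hd, if_neg (show ¬ (2 * i.val + 1) % 2 = 0 by omega)]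
    show l - 1 - (x ⟨(2 * i.val + 1) / 2, hd⟩).val = _
    rw [hidx]
  have hinj : Function.Injective f := by
    intro x y hxy
    funext i
    have := congrFun hxy ⟨2 * i.val, hlt0 i⟩
    rwa [hf0, hf0] at this
  have key : ∀ x y z : Fin m → Fin l, y ≠ z →
      f x ⊓ f y ≠ f x ⊓ f z ∧ f x ⊔ f y ≠ f x ⊔ f z := by
    intro x y z hyz
    obtain ⟨i, hi⟩ : ∃ i, y i ≠ z i := by
      by_contra h; push_neg at h; exact hyz (funext h)
    have hxl := (x i).isLt
    have hyl := (y i).isLt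
    have hzl := (z i).isLt
    constructor
    · intro h
      have e1 := congrFun h ⟨2 * i.val, hlt0 i⟩
      have e2 := congrFun h ⟨2 * i.val + 1, hlt1 i⟩
      rw [Pi.inf_apply, Pi.inf_apply, hf0, hf0, hf0] at e1
      rw [Pi.inf_apply, Pi.inf_apply] at e2
      have v1 : min (x i).val (y i).val = min (x i).val (z i).val :=
        congrArg Fin.val e1
      have v2 : min (f x ⟨2 * i.val + 1, hlt1 i⟩).val (f y ⟨2 * i.val + 1, hlt1 i⟩).val
          = min (f x ⟨2 * i.val + 1, hlt1 i⟩).val (f z ⟨2 * i.val + 1, hlt1 i⟩).val :=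
        congrArg Fin.val e2
      rw [hf1, hf1, hf1] at v2
      exact hi (Fin.ext (by omega))
    · intro h
      have e1 := congrFun h ⟨2 * i.val, hlt0 i⟩
      have e2 := congrFun h ⟨2 * i.val + 1, hlt1 i⟩
      rw [Pi.sup_apply, Pi.sup_apply, hf0, hf0, hf0] at e1
      rw [Pi.sup_apply, Pi.sup_apply] at e2
      have v1 : max (x i).val (y i).val = max (x i).val (z i).val :=
        congrArg Fin.val e1
      have v2 : max (f x ⟨2 * i.val + 1, hlt1 i⟩).val (f y ⟨2 * i.val + 1, hlt1 i⟩).val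
          = max (f x ⟨2 * i.val + 1, hlt1 i⟩).val (f z ⟨2 * i.val + 1, hlt1 i⟩).val :=
        congrArg Fin.val e2
      rw [hf1, hf1, hf1] at v2
      exact hi (Fin.ext (by omega))
  refine ⟨Finset.univ.image f, ?_, ?_⟩
  · intro a1 h1 a2 h2 a3 h3 _ _ h23
    simp only [Finset.mem_image, Finset.mem_univ, true_and] at h1 h2 h3
    obtain ⟨x1, rfl⟩ := h1
    obtain ⟨x2, rfl⟩ := h2
    obtain ⟨x3, rfl⟩ := h3
    exact key x1 x2 x3 (fun h => h23 (by rw [h]))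
  · rw [Finset.card_image_of_injective _ hinj, Finset.card_univ]
    simp
end
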